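/- arXiv:2301.09814 — 10 statements merged into one kernel-verified Lean document; each statement's English description precedes it below -/
import Mathlib

section
/- There exists a ZFSet M such that for every ZFSet z, z ∈ M if and only if there is a natural number n with z = powerset^[n] ω. (This is the set {ω, ℘(ω), ℘(℘(ω)), …} whose existence von Neumann proves, in his letter to Fraenkel of 17 June 1927, using the replacement axiom; it is the set whose existence does not follow from Zermelo's original axioms.) -/
/-- The set `{ω, ℘(ω), ℘(℘(ω)), …}` whose existence von Neumann proves, in his letter
to Fraenkel of 17 June 1927, using the replacement axiom. -/
theorem vonNeumann_exists_iterated_powerset_omega :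
    ∃ M : ZFSet, ∀ z : ZFSet, z ∈ M ↔ ∃ n : ℕ, z = ZFSet.powerset^[n] ZFSet.omega :=
  ⟨ZFSet.range fun n : ℕ => ZFSet.powerset^[n] ZFSet.omega, fun _ =>
    ZFSet.mem_range.trans (exists_congr fun _ => eq_comm)⟩
end

section
/- If M and N are Anfänge, then the intersection M ∩ N is an Anfang. -/
/-- The von Neumann natural number `n̄`: `0̄ = ∅`, `(n+1)‾ = n̄⁺ = insert n̄ n̄`. -/
def vN : ℕ → ZFSet
  | 0 => ∅
  | n + 1 => insert (vN n) (vN n)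

/-- An *Anfang* in the sense of von Neumann's letter to Fraenkel of 17 June 1927:
every element `u` of `M` is either the pair `⟨1̄, ω⟩` or of the form `⟨x⁺, ℘(y)⟩`
for some pair `⟨x, y⟩ ∈ M`. -/
def Anfang (M : ZFSet) : Prop :=
  ∀ u ∈ M, u = ZFSet.pair (vN 1) ZFSet.omega ∨
    ∃ x y : ZFSet, ZFSet.pair x y ∈ M ∧ u = ZFSet.pair (insert x x) (ZFSet.powerset y)

/-! An element of `M ∩ N` that is not `⟨1̄, ω⟩` has a predecessor `⟨x, y⟩` in `M` and one in `N`;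
since `x ↦ x⁺` and `℘` are injective, both predecessors coincide and lie in `M ∩ N`. -/

namespace ZFSet

theorem insert_self_injective : Function.Injective fun x : ZFSet => insert x x := by
  intro x x' (h : insert x x = insert x' x')
  have hx : x ∈ insert x' x' := h ▸ mem_insert x x
  have hx' : x' ∈ insert x x := h ▸ mem_insert x' x'
  rcases mem_insert_iff.mp hx with rfl | hxx'
  · rfl
  rcases mem_insert_iff.mp hx' with rfl | hx'x
  · rfl
  exact (mem_asymm hxx' hx'x).elim

theorem powerset_injective : Function.Injective powerset := by
  intro y y' h
  have hy : y ⊆ y' := mem_powerset.mp (h ▸ mem_powerset.mpr subset_rfl)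
  have hy' : y' ⊆ y := mem_powerset.mp (h ▸ mem_powerset.mpr subset_rfl)
  exact hy.antisymm hy'

end ZFSet

/-- The intersection of two Anfänge is an Anfang. -/
theorem Anfang.inter {M N : ZFSet} (hM : Anfang M) (hN : Anfang N) :
    Anfang (M ∩ N) := by
  intro u hu
  obtain ⟨huM, huN⟩ := ZFSet.mem_inter.mp hu
  rcases hM u huM with h | ⟨x, y, hxyM, rfl⟩
  · exact Or.inl h
  rcases hN _ huN with h | ⟨x', y', hxyN, heq⟩
  · exact Or.inl h
  obtain ⟨hx, hy⟩ := ZFSet.pair_injective heq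
  obtain rfl : x = x' := ZFSet.insert_self_injective hx
  obtain rfl : y = y' := ZFSet.powerset_injective hy
  exact Or.inr ⟨x, y, ZFSet.mem_inter.mpr ⟨hxyM, hxyN⟩, rfl⟩
end

section
/- If 𝔐 is a nonempty ZFSet each of whose elements is an Anfang, then the intersection ⋂₀ 𝔐 (ZFSet.sInter 𝔐) is an Anfang. -/
theorem Anfang.pair_mem_of_succ_mem {M x y : ZFSet} (hM : Anfang M)
    (hmem : ZFSet.pair (insert x x) (ZFSet.powerset y) ∈ M)
    (hne : ZFSet.pair (insert x x) (ZFSet.powerset y) ≠ ZFSet.pair (vN 1) ZFSet.omega) :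
    ZFSet.pair x y ∈ M := by
  rcases hM _ hmem with h | ⟨x', y', hmem', heq⟩
  · exact absurd h hne
  obtain ⟨hx, hy⟩ := ZFSet.pair_inj.1 heq
  rwa [ZFSet.insert_self_injective hx, ZFSet.powerset_injective hy]

/-- The intersection of a nonempty set of Anfänge is an Anfang. -/
theorem Anfang.sInter {𝔐 : ZFSet} (h : ∀ M ∈ 𝔐, Anfang M) :
    Anfang (ZFSet.sInter 𝔐) := by
  intro u hu
  obtain ⟨M₀, hM₀⟩ : 𝔐.Nonempty := by
    rcases 𝔐.eq_empty_or_nonempty with rfl | h𝔐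
    · exact absurd hu (by simp)
    · exact h𝔐
  by_cases hbase : u = ZFSet.pair (vN 1) ZFSet.omega
  · exact Or.inl hbase
  rcases h M₀ hM₀ u (ZFSet.mem_of_mem_sInter hu hM₀) with hbase' | ⟨x, y, -, rfl⟩
  · exact absurd hbase' hbase
  exact Or.inr ⟨x, y, (ZFSet.mem_sInter ⟨M₀, hM₀⟩).2 fun M hM =>
    (h M hM).pair_mem_of_succ_mem (ZFSet.mem_of_mem_sInter hu hM) hbase, rfl⟩
end

section
/- If a ZFSet u belongs to at least one Anfang, then there exists an Anfang M such that u ∈ M and M ⊆ M' for every Anfang M' with u ∈ M' (that is, a least Anfang containing u exists). -/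
/-!
Every element of an Anfang other than `⟨1̄, ω⟩` has a unique predecessor `⟨x, y⟩` in it, because
`x ↦ x⁺` and `y ↦ ℘(y)` are injective and `℘(y)` is never `ω`. Hence membership in *every*
Anfang containing `u` is inherited by predecessors, so cutting a given Anfang down to the elements
common to all Anfänge containing `u` yields again an Anfang: the least one containing `u`.
-/

namespace ZFSet

/-- If `℘(y) = ω` then `y ∈ ω`, so `y⁺ ∈ ω = ℘(y)`, i.e. `y ∈ y⁺ ⊆ y`. -/
theorem powerset_ne_omega (y : ZFSet) : powerset y ≠ omega := by
  intro h
  have hy : y ∈ omega := h ▸ mem_powerset.mpr subset_rfl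
  have hsucc : insert y y ⊆ y := mem_powerset.mp (h ▸ omega_succ hy)
  exact mem_irrefl y (hsucc (mem_insert y y))

end ZFSet

open ZFSet

theorem Anfang.pair_mem_of_pair_insert_powerset_mem {M x y : ZFSet} (hM : Anfang M)
    (h : pair (insert x x) (powerset y) ∈ M) : pair x y ∈ M := by
  rcases hM _ h with hstart | ⟨x', y', hmem, heq⟩
  · exact absurd (pair_inj.mp hstart).2 (powerset_ne_omega y)
  · obtain ⟨hx, hy⟩ := pair_inj.mp heq
    rwa [insert_self_injective hx, powerset_injective hy]

theorem Anfang.sep_mem_all {M : ZFSet} (hM : Anfang M) (S : Set ZFSet)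
    (hS : ∀ M' ∈ S, Anfang M') : Anfang (M.sep fun v => ∀ M' ∈ S, v ∈ M') := by
  intro v hv
  obtain ⟨hvM, hvS⟩ := mem_sep.mp hv
  refine (hM v hvM).imp_right fun ⟨x, y, hxy, hv_eq⟩ => ⟨x, y, ?_, hv_eq⟩
  exact mem_sep.mpr ⟨hxy, fun M' hM' =>
    (hS M' hM').pair_mem_of_pair_insert_powerset_mem (hv_eq ▸ hvS M' hM')⟩

/-- If `u` belongs to at least one Anfang, then there is a least Anfang containing `u`. -/
theorem exists_least_Anfang {u : ZFSet} (h : ∃ M : ZFSet, Anfang M ∧ u ∈ M) :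
    ∃ M : ZFSet, Anfang M ∧ u ∈ M ∧ ∀ M' : ZFSet, Anfang M' → u ∈ M' → M ⊆ M' := by
  obtain ⟨M₀, hM₀, hu₀⟩ := h
  let S : Set ZFSet := {M' | Anfang M' ∧ u ∈ M'}
  refine ⟨M₀.sep fun v => ∀ M' ∈ S, v ∈ M', hM₀.sep_mem_all S fun M' hM' => hM'.1, ?_, ?_⟩
  · exact mem_sep.mpr ⟨hu₀, fun M' hM' => hM'.2⟩
  · exact fun M' hM' hu' v hv => (mem_sep.mp hv).2 M' ⟨hM', hu'⟩
end

section
/- For every ZFSet u there is at most one Anfang M such that u ∈ M and no Anfang that is a proper subset of M contains u: if M₁ and M₂ are both Anfänge containing u with this minimality property, then M₁ = M₂. (Von Neumann's claim that for each u there is 'kein oder nur ein' such M.) -/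
theorem Anfang.inter_s4 {M₁ M₂ : ZFSet} (h₁ : Anfang M₁) (h₂ : Anfang M₂) :
    Anfang (M₁ ∩ M₂) := by
  intro u hu
  rw [ZFSet.mem_inter] at hu
  rcases h₁ u hu.1 with h | ⟨x, y, hxy₁, rfl⟩
  · exact Or.inl h
  rcases h₂ _ hu.2 with h | ⟨x', y', hxy₂, he⟩
  · exact Or.inl h
  obtain ⟨hx, hy⟩ := ZFSet.pair_injective he
  obtain rfl := ZFSet.insert_self_injective hx
  obtain rfl := ZFSet.powerset_injective hy
  exact Or.inr ⟨x, y, ZFSet.mem_inter.mpr ⟨hxy₁, hxy₂⟩, rfl⟩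

theorem Anfang.eq_of_subset_of_minimal {u M N : ZFSet}
    (hmin : ¬ ∃ M' : ZFSet, Anfang M' ∧ M' ⊆ M ∧ M' ≠ M ∧ u ∈ M')
    (hN : Anfang N) (hNM : N ⊆ M) (hu : u ∈ N) : N = M :=
  not_not.mp fun hne => hmin ⟨N, hN, hNM, hne, hu⟩

/-- For every `u` there is at most one Anfang `M` containing `u` such that no Anfang
that is a proper subset of `M` contains `u` ("kein oder nur ein"). -/
theorem minimal_Anfang_unique {u M₁ M₂ : ZFSet}
    (h₁ : Anfang M₁) (hu₁ : u ∈ M₁)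
    (hmin₁ : ¬ ∃ M' : ZFSet, Anfang M' ∧ M' ⊆ M₁ ∧ M' ≠ M₁ ∧ u ∈ M')
    (h₂ : Anfang M₂) (hu₂ : u ∈ M₂)
    (hmin₂ : ¬ ∃ M' : ZFSet, Anfang M' ∧ M' ⊆ M₂ ∧ M' ≠ M₂ ∧ u ∈ M') :
    M₁ = M₂ := by
  have hA : Anfang (M₁ ∩ M₂) := h₁.inter_s4 h₂
  have hu : u ∈ M₁ ∩ M₂ := ZFSet.mem_inter.mpr ⟨hu₁, hu₂⟩
  have e₁ : M₁ ∩ M₂ = M₁ :=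
    Anfang.eq_of_subset_of_minimal hmin₁ hA (fun _ hz => (ZFSet.mem_inter.mp hz).1) hu
  have e₂ : M₁ ∩ M₂ = M₂ :=
    Anfang.eq_of_subset_of_minimal hmin₂ hA (fun _ hz => (ZFSet.mem_inter.mp hz).2) hu
  rw [← e₁, e₂]
end

section
/- For every ZFSet u there exists a ZFSet H whose elements are exactly those Anfänge M such that u ∈ M and no Anfang that is a proper subset of M contains u. (The set h(u) of von Neumann's letter of 17 June 1927.) -/
/-! Every element of an Anfang is one of the pairs `⟨(n+1)‾, ℘ⁿ(ω)⟩`: by `∈`-induction on the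
first coordinate, since `x ∈ x⁺`. So all Anfänge are subsets of one set, and `h(u)` is
carved out of its power set by separation. -/

universe u

theorem ZFSet.exists_mem_iff_of_forall_subset {P : ZFSet.{u} → Prop} (S : ZFSet.{u})
    (hS : ∀ M, P M → M ⊆ S) : ∃ H : ZFSet.{u}, ∀ M, M ∈ H ↔ P M :=
  ⟨S.powerset.sep P, fun M => by
    rw [ZFSet.mem_sep, ZFSet.mem_powerset]
    exact ⟨And.right, fun hM => ⟨hS M hM, hM⟩⟩⟩

noncomputable def anfangPair (n : ℕ) : ZFSet.{u} :=
  ZFSet.pair (vN (n + 1)) (ZFSet.powerset^[n] ZFSet.omega)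

noncomputable def anfangPairs : ZFSet.{u} :=
  ZFSet.range anfangPair

theorem anfangPair_succ (n : ℕ) :
    anfangPair (n + 1) = ZFSet.pair (insert (vN (n + 1)) (vN (n + 1)))
      (ZFSet.powerset (ZFSet.powerset^[n] ZFSet.omega)) := by
  rw [anfangPair, Function.iterate_succ_apply']
  rfl

namespace Anfang

variable {M : ZFSet}

theorem exists_anfangPair_eq_of_pair_mem (hM : Anfang M) (a : ZFSet) :
    ∀ b, ZFSet.pair a b ∈ M → ∃ n, ZFSet.pair a b = anfangPair n := by
  induction a using ZFSet.inductionOn with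
  | h a ih =>
    intro b hab
    rcases hM _ hab with h1 | ⟨x, y, hxy, hab_eq⟩
    · exact ⟨0, h1⟩
    · obtain ⟨rfl, rfl⟩ := ZFSet.pair_injective hab_eq
      obtain ⟨n, hn⟩ := ih x (ZFSet.mem_insert x x) y hxy
      obtain ⟨rfl, rfl⟩ := ZFSet.pair_injective hn
      exact ⟨n + 1, (anfangPair_succ n).symm⟩

theorem subset_anfangPairs (hM : Anfang M) : M ⊆ anfangPairs := by
  intro u hu
  rw [anfangPairs, ZFSet.mem_range]
  rcases hM u hu with rfl | ⟨x, y, -, rfl⟩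
  · exact ⟨0, rfl⟩
  · obtain ⟨n, hn⟩ := hM.exists_anfangPair_eq_of_pair_mem _ _ hu
    exact ⟨n, hn.symm⟩

end Anfang

/-- The set `h(u)` of von Neumann's letter of 17 June 1927: the set of all Anfänge `M`
containing `u` such that no Anfang that is a proper subset of `M` contains `u`. -/
theorem exists_h_of_minimal_Anfaenge (u : ZFSet) :
    ∃ H : ZFSet, ∀ M : ZFSet,
      M ∈ H ↔ Anfang M ∧ u ∈ M ∧
        ¬ ∃ M' : ZFSet, Anfang M' ∧ M' ⊆ M ∧ M' ≠ M ∧ u ∈ M' := by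
  exact ZFSet.exists_mem_iff_of_forall_subset anfangPairs fun M hM => hM.1.subset_anfangPairs
end

section
/- For every natural number n there exists an Anfang M with pair (n+1)‾ (powerset^[n] ω) ∈ M. (Von Neumann's induction claim that for every positive integer x there is an Anfang containing an element with first coordinate x, whose second coordinate is the x-fold iterated power set of ω.) -/
theorem Anfang.singleton_pair_one_omega : Anfang {ZFSet.pair (vN 1) ZFSet.omega} :=
  fun _ hu => Or.inl (ZFSet.mem_singleton.1 hu)

theorem Anfang.insert_pair_succ_powerset {M x y : ZFSet} (hM : Anfang M)
    (hxy : ZFSet.pair x y ∈ M) :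
    Anfang (insert (ZFSet.pair (insert x x) (ZFSet.powerset y)) M) := by
  intro u hu
  rcases ZFSet.mem_insert_iff.1 hu with rfl | hu
  · exact Or.inr ⟨x, y, ZFSet.mem_insert_of_mem _ hxy, rfl⟩
  · rcases hM u hu with h | ⟨x', y', hxy', rfl⟩
    · exact Or.inl h
    · exact Or.inr ⟨x', y', ZFSet.mem_insert_of_mem _ hxy', rfl⟩

/-- For every natural number `n` there is an Anfang containing the pair
`⟨(n+1)‾, ℘^[n](ω)⟩`. -/
theorem exists_Anfang_containing (n : ℕ) :
    ∃ M : ZFSet, Anfang M ∧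
      ZFSet.pair (vN (n + 1)) (ZFSet.powerset^[n] ZFSet.omega) ∈ M := by
  induction n with
  | zero => exact ⟨_, Anfang.singleton_pair_one_omega, ZFSet.mem_singleton.2 rfl⟩
  | succ n ih =>
    obtain ⟨M, hM, hmem⟩ := ih
    refine ⟨_, hM.insert_pair_succ_powerset hmem, ?_⟩
    rw [Function.iterate_succ_apply']
    exact ZFSet.mem_insert _ _
end

section
/- If M is an Anfang and u ∈ M, then there exists a natural number n such that u = pair (n+1)‾ (powerset^[n] ω). (Every element of an Anfang is a pair whose first coordinate is a positive von Neumann natural number n+1 and whose second coordinate is the n-fold iterated power set of ω; the proof uses the well-foundedness of membership.) -/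
/-!
The pair `⟨x, y⟩` has rank `max (rank x) (rank y) + 2`, and both `x ↦ x⁺` and `℘` raise the
rank by one, so the predecessor `⟨x, y⟩` of a non-initial element `⟨x⁺, ℘ y⟩` of an Anfang has
strictly smaller rank. Induction on rank then unwinds every element down to `⟨1̄, ω⟩`.
-/

namespace ZFSet

open Order

theorem rank_insert_self (x : ZFSet) : rank (insert x x) = succ (rank x) := by
  rw [rank_insert, max_eq_left (le_succ _)]

theorem rank_pair_eq (x y : ZFSet) : rank (pair x y) = succ (succ (max (rank x) (rank y))) := by
  rw [pair, rank_pair, rank_singleton, rank_pair, ← Order.succ_max, ← Order.succ_max,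
    max_eq_right (succ_le_succ (le_max_left _ _))]

theorem rank_pair_lt_rank_pair {x y x' y' : ZFSet} (hx : rank x < rank x') (hy : rank y < rank y') :
    rank (pair x y) < rank (pair x' y') := by
  simp only [rank_pair_eq, succ_lt_succ_iff]
  exact max_lt_max hx hy

end ZFSet

/-- Every element of an Anfang is of the form `⟨(n+1)‾, ℘^[n](ω)⟩` for some `n : ℕ`. -/
theorem Anfang.mem_eq {M u : ZFSet} (hM : Anfang M) (hu : u ∈ M) :
    ∃ n : ℕ, u = ZFSet.pair (vN (n + 1)) (ZFSet.powerset^[n] ZFSet.omega) := by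
  induction u using (InvImage.wf ZFSet.rank wellFounded_lt).induction with
  | _ u ih =>
    rcases hM u hu with rfl | ⟨x, y, hxy, rfl⟩
    · exact ⟨0, rfl⟩
    · obtain ⟨n, hn⟩ := ih _ (ZFSet.rank_pair_lt_rank_pair
        (ZFSet.rank_insert_self x ▸ Order.lt_succ _) (ZFSet.rank_powerset y ▸ Order.lt_succ _)) hxy
      obtain ⟨rfl, rfl⟩ := ZFSet.pair_injective hn
      exact ⟨n + 1, by rw [Function.iterate_succ_apply']; rfl⟩
end

section
/- (Definition by transfinite induction, in the widest form stated in von Neumann's letter of 26 October 1923.) For every function a : ZFSet → ZFSet there exists exactly one function b : ZFSet → ZFSet with the following two properties: (1) b x = ∅ whenever x is not an ordinal; (2) for every ordinal x there exists a ZFSet r whose elements are exactly the pairs pair y (b y) with y ∈ x, and b x = a (pair x r). -/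
/-- A ZF set is an ordinal in von Neumann's sense if it is transitive and every element
of it is transitive. -/
def VNOrdinal (x : ZFSet) : Prop :=
  (∀ y ∈ x, y ⊆ x) ∧ ∀ y ∈ x, ∀ z ∈ y, z ⊆ y

/-!
Both conditions together say that `b x = G x (b↾x)` for every set `x`, where `b↾x` is the graph
of `b` on `x` and `G x r` is `a ⟨x, r⟩` or `∅` according as `x` is an ordinal or not. Since `∈` is
well founded, such an equation has exactly one solution for any step function `G`: well-founded
recursion gives one, and two solutions agree by `∈`-induction.
-/

attribute [local instance] Classical.allZFSetDefinable

namespace ZFSet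

theorem eq_map_iff {f : ZFSet → ZFSet} {x r : ZFSet} :
    r = map f x ↔ ∀ w, w ∈ r ↔ ∃ y ∈ x, w = pair y (f y) := by
  simp only [ZFSet.ext_iff, mem_map, eq_comm]

theorem map_congr {f g : ZFSet → ZFSet} {x : ZFSet} (h : ∀ y ∈ x, f y = g y) :
    map f x = map g x :=
  ext fun w => by
    simp only [mem_map]
    exact exists_congr fun y => and_congr_right fun hy => by rw [h y hy]

section MemRec

variable (G : ZFSet → ZFSet → ZFSet)

open Classical in
noncomputable def memRec : ZFSet → ZFSet :=
  mem_wf.fix fun x IH => G x (map (fun y => if h : y ∈ x then IH y h else ∅) x)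

theorem memRec_eq (x : ZFSet) : memRec G x = G x (map (memRec G) x) := by
  rw [memRec, WellFounded.fix_eq]
  exact congrArg (G x) (map_congr fun y hy => dif_pos hy)

variable {G}

theorem eq_memRec {b : ZFSet → ZFSet} (hb : ∀ x, b x = G x (map b x)) : b = memRec G := by
  funext x
  induction x using inductionOn with
  | h x IH => rw [hb, memRec_eq, map_congr IH]

theorem existsUnique_forall_eq_apply_map : ∃! b : ZFSet → ZFSet, ∀ x, b x = G x (map b x) :=
  ⟨memRec G, memRec_eq G, fun _ => eq_memRec⟩

end MemRec

end ZFSet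

open ZFSet

/-- Definition by transfinite induction, in the widest form stated in von Neumann's
letter of 26 October 1923: for every `a` there is exactly one `b` with `b x = ∅` for
non-ordinals `x`, and `b x = a ⟨x, b↾x⟩` for ordinals `x`. -/
theorem transfinite_recursion_unique (a : ZFSet → ZFSet) :
    ∃! b : ZFSet → ZFSet,
      (∀ x : ZFSet, ¬ VNOrdinal x → b x = ∅) ∧
      (∀ x : ZFSet, VNOrdinal x →
        ∃ r : ZFSet, (∀ w : ZFSet, w ∈ r ↔ ∃ y ∈ x, w = ZFSet.pair y (b y)) ∧
          b x = a (ZFSet.pair x r)) := by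
  classical
  let G : ZFSet → ZFSet → ZFSet := fun x r => if VNOrdinal x then a (pair x r) else ∅
  have conditions_iff (b : ZFSet → ZFSet) :
      ((∀ x, ¬ VNOrdinal x → b x = ∅) ∧
        ∀ x, VNOrdinal x →
          ∃ r, (∀ w, w ∈ r ↔ ∃ y ∈ x, w = pair y (b y)) ∧ b x = a (pair x r)) ↔
        ∀ x, b x = G x (map b x) := by
    simp only [← eq_map_iff, exists_eq_left, G, ← forall_and]
    refine forall_congr' fun x => ?_
    by_cases hx : VNOrdinal x <;> simp [hx]
  exact (existsUnique_congr conditions_iff).2 existsUnique_forall_eq_apply_map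
end

section
/- (Comparability of ordinals, underlying von Neumann's requirement that 'die Vergleichbarkeit nachgewiesen werde'.) If o and o' are ordinals, then o ∈ o', or o = o', or o' ∈ o. -/
theorem vnOrdinal_iff_isOrdinal {x : ZFSet} : VNOrdinal x ↔ x.IsOrdinal :=
  ZFSet.isOrdinal_iff_forall_mem_isTransitive.symm

/-- Comparability of von Neumann ordinals. -/
theorem VNOrdinal.trichotomy {o o' : ZFSet} (h : VNOrdinal o) (h' : VNOrdinal o') :
    o ∈ o' ∨ o = o' ∨ o' ∈ o :=
  (vnOrdinal_iff_isOrdinal.1 h).mem_trichotomous (vnOrdinal_iff_isOrdinal.1 h')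
end
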